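/- An open set D ⊆ ℂⁿ that is the union of an increasing sequence D₁ ⊆ D₂ ⊆ ⋯ of pseudoconvex open subsets is pseudoconvex. -/

import Mathlib

/-!
On a compact disc inside `⋃ j, D j` the sets `D j` eventually contain the disc, and on it the
functions `-log d(·, (D j)ᶜ)` decrease pointwise to `-log d(·, (⋃ j, D j)ᶜ)`: the boundary
distances increase, and they converge because every closed ball inside the union is eventually
inside some `D j`. Monotone convergence of the circle integrals then carries the sub-mean value
inequality of the `D j` over to the union.
-/

open Metric MeasureTheory Real Filter Set

noncomputable section

/-- `u` is plurisubharmonic on `D`: upper semicontinuous on `D` and satisfies the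
sub-mean value inequality on every circle contained (with its disc) in `D` along
every complex line. -/
def PlurisubharmonicOn {E : Type*} [NormedAddCommGroup E] [NormedSpace ℂ E]
    (u : E → ℝ) (D : Set E) : Prop :=
  UpperSemicontinuousOn u D ∧
  ∀ (a v : E) (r : ℝ), 0 < r →
    (∀ t : ℂ, ‖t‖ ≤ r → a + t • v ∈ D) →
    u a ≤ (2 * π)⁻¹ *
      ∫ θ in (0:ℝ)..(2*π), u (a + (((r : ℂ) * Complex.exp (θ * Complex.I)) • v))

/-- `D` is pseudoconvex: open, and either all of the space or
`-log (boundary distance)` is plurisubharmonic on `D`. -/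
def Pseudoconvex {E : Type*} [NormedAddCommGroup E] [NormedSpace ℂ E]
    (D : Set E) : Prop :=
  IsOpen D ∧ (D = Set.univ ∨
    PlurisubharmonicOn (fun z => -Real.log (Metric.infDist z Dᶜ)) D)

/-- Strict plurisubharmonicity: near each point, `u` minus a small multiple of
`‖· - z‖²` is still plurisubharmonic. -/
def StrictPlurisubharmonicOn {E : Type*} [NormedAddCommGroup E] [NormedSpace ℂ E]
    (u : E → ℝ) (U : Set E) : Prop :=
  ∀ z ∈ U, ∃ ε > (0:ℝ), ∃ r > (0:ℝ), Metric.ball z r ⊆ U ∧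
    PlurisubharmonicOn (fun w => u w - ε * ‖w - z‖ ^ 2) (Metric.ball z r)

/-- `f`, holomorphic on `D`, does not extend holomorphically through the boundary point `p`. -/
def NotExtendableAt {E : Type*} [NormedAddCommGroup E] [NormedSpace ℂ E]
    (f : E → ℂ) (D : Set E) (p : E) : Prop :=
  ¬ ∃ (U : Set E) (g : E → ℂ), IsOpen U ∧ p ∈ U ∧ DifferentiableOn ℂ g U ∧
      ∃ V : Set E, IsOpen V ∧ V.Nonempty ∧ V ⊆ D ∩ U ∧ Set.EqOn f g V

/-- Domain of holomorphy: for each boundary point some holomorphic function on `D`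
does not extend through it. -/
def DomainOfHolomorphy {E : Type*} [NormedAddCommGroup E] [NormedSpace ℂ E]
    (D : Set E) : Prop :=
  IsOpen D ∧ ∀ p ∈ frontier D, ∃ f : E → ℂ,
    DifferentiableOn ℂ f D ∧ NotExtendableAt f D p

open Topology

section BoundaryDistance

variable {X : Type*} [PseudoMetricSpace X]

lemma infDist_compl_pos {U : Set X} (hU : IsOpen U) (hUc : Uᶜ.Nonempty) {z : X} (hz : z ∈ U) :
    0 < infDist z Uᶜ :=
  (hU.isClosed_compl.notMem_iff_infDist_pos hUc).mp (not_not_intro hz)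

lemma infDist_compl_mono {s t : Set X} (hst : s ⊆ t) (ht : tᶜ.Nonempty) (z : X) :
    infDist z sᶜ ≤ infDist z tᶜ :=
  infDist_le_infDist_of_subset (compl_subset_compl.mpr hst) ht

lemma continuousOn_neg_log_infDist_compl {U : Set X} (hU : IsOpen U) (hUc : Uᶜ.Nonempty) :
    ContinuousOn (fun z => -Real.log (infDist z Uᶜ)) U := fun _ hz =>
  ((continuous_infDist_pt Uᶜ).continuousAt.log
    (infDist_compl_pos hU hUc hz).ne').neg.continuousWithinAt

lemma tendsto_infDist_compl_iUnion [ProperSpace X] {D : ℕ → Set X} (hmono : Monotone D)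
    (hopen : ∀ j, IsOpen (D j)) (hUc : (⋃ j, D j)ᶜ.Nonempty) (z : X) :
    Tendsto (fun j => infDist z (D j)ᶜ) atTop (𝓝 (infDist z (⋃ j, D j)ᶜ)) := by
  have hDc : ∀ j, (D j)ᶜ.Nonempty := fun j =>
    hUc.mono (compl_subset_compl.mpr (subset_iUnion D j))
  refine tendsto_atTop_isLUB (fun i j hij => infDist_compl_mono (hmono hij) (hDc j) z)
    ⟨?_, fun b hb => ?_⟩
  · rintro _ ⟨j, rfl⟩
    exact infDist_compl_mono (subset_iUnion D j) hUc z
  by_contra! hbd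
  obtain ⟨ρ, hbρ, hρd⟩ := exists_between hbd
  have hball : closedBall z ρ ⊆ ⋃ j, D j := fun y hy => by
    by_contra hyU
    have := infDist_le_dist_of_mem (x := z) (mem_compl hyU)
    have := mem_closedBall'.mp hy
    linarith
  obtain ⟨j, hj⟩ :=
    (isCompact_closedBall z ρ).elim_directed_cover D hopen hball hmono.directed_le
  have hρj : ρ ≤ infDist z (D j)ᶜ := (le_infDist (hDc j)).mpr fun y hy => by
    by_contra! hyρ
    exact hy (hj (mem_closedBall'.mpr hyρ.le))
  have := hb ⟨j, rfl⟩
  linarith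

end BoundaryDistance

lemma tendsto_intervalIntegral_of_antitone {g : ℕ → ℝ → ℝ} {G : ℝ → ℝ} {a b : ℝ} (hab : a ≤ b)
    (hg : ∀ k, Continuous (g k)) (hG : Continuous G) (hanti : ∀ θ, Antitone fun k => g k θ)
    (hlim : ∀ θ, Tendsto (fun k => g k θ) atTop (𝓝 (G θ))) :
    Tendsto (fun k => ∫ θ in a..b, g k θ) atTop (𝓝 (∫ θ in a..b, G θ)) := by
  simp only [intervalIntegral.integral_of_le hab]
  exact integral_tendsto_of_tendsto_of_antitone (fun k => (hg k).integrableOn_Ioc)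
    hG.integrableOn_Ioc (ae_of_all _ hanti) (ae_of_all _ hlim)

theorem PlurisubharmonicOn.of_antitone_tendsto {E : Type*} [NormedAddCommGroup E]
    [NormedSpace ℂ E] {u : ℕ → E → ℝ} {v : E → ℝ} {D : ℕ → Set E}
    (hmono : Monotone D) (hopen : ∀ j, IsOpen (D j))
    (hpsh : ∀ j, PlurisubharmonicOn (u j) (D j)) (hcont : ∀ j, ContinuousOn (u j) (D j))
    (hanti : ∀ i j, i ≤ j → ∀ z ∈ D i, u j z ≤ u i z)
    (hlim : ∀ z ∈ ⋃ j, D j, Tendsto (fun j => u j z) atTop (𝓝 (v z)))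
    (hv : ContinuousOn v (⋃ j, D j)) :
    PlurisubharmonicOn v (⋃ j, D j) := by
  refine ⟨hv.upperSemicontinuousOn, fun a w r hr hdisc => ?_⟩
  set c : ℝ → E := fun θ => a + ((r : ℂ) * Complex.exp (θ * Complex.I)) • w
  set K := (fun t : ℂ => a + t • w) '' closedBall 0 r
  have hKU : K ⊆ ⋃ j, D j := by
    rintro _ ⟨t, ht, rfl⟩
    exact hdisc t (mem_closedBall_zero_iff.mp ht)
  obtain ⟨N, hN⟩ := ((isCompact_closedBall 0 r).image (by fun_prop)).elim_directed_cover
    D hopen hKU hmono.directed_le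
  have hKD : ∀ k, K ⊆ D (N + k) := fun k => hN.trans (hmono (Nat.le_add_right N k))
  have hcK : ∀ θ : ℝ, c θ ∈ K := fun θ => ⟨_, by simp [abs_of_pos hr], rfl⟩
  have haK : a ∈ K := ⟨0, by simpa using hr.le, by simp⟩
  have hc : Continuous c := by fun_prop
  have hshift : Tendsto (fun k => N + k) atTop atTop :=
    tendsto_atTop_mono (Nat.le_add_left · N) tendsto_id
  have hstep : ∀ k, u (N + k) a ≤ (2 * π)⁻¹ * ∫ θ in (0 : ℝ)..(2 * π), u (N + k) (c θ) :=
    fun k => (hpsh (N + k)).2 a w r hr fun t ht =>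
      hKD k ⟨t, mem_closedBall_zero_iff.mpr ht, rfl⟩
  have hint : Tendsto (fun k => ∫ θ in (0 : ℝ)..(2 * π), u (N + k) (c θ)) atTop
      (𝓝 (∫ θ in (0 : ℝ)..(2 * π), v (c θ))) :=
    tendsto_intervalIntegral_of_antitone (by positivity)
      (fun k => (hcont (N + k)).comp_continuous hc fun θ => hKD k (hcK θ))
      (hv.comp_continuous hc fun θ => hKU (hcK θ))
      (fun θ i j hij => hanti _ _ (by omega) _ (hKD i (hcK θ)))
      (fun θ => (hlim _ (hKU (hcK θ))).comp hshift)
  exact le_of_tendsto_of_tendsto' ((hlim a (hKU haK)).comp hshift) (hint.const_mul _) hstep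

/-- Behnke–Stein: an increasing union of pseudoconvex open sets in ℂⁿ
is pseudoconvex. -/
theorem stmt6 (n : ℕ) (D : ℕ → Set (EuclideanSpace ℂ (Fin n)))
    (hmono : Monotone D) (hpc : ∀ j, Pseudoconvex (D j)) :
    Pseudoconvex (⋃ j, D j) := by
  have hopen : ∀ j, IsOpen (D j) := fun j => (hpc j).1
  have hUopen : IsOpen (⋃ j, D j) := isOpen_iUnion hopen
  refine ⟨hUopen, or_iff_not_imp_left.mpr fun hU => ?_⟩
  have hUc : (⋃ j, D j)ᶜ.Nonempty := nonempty_compl.mpr hU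
  have hDc : ∀ j, (D j)ᶜ.Nonempty := fun j =>
    hUc.mono (compl_subset_compl.mpr (subset_iUnion D j))
  refine PlurisubharmonicOn.of_antitone_tendsto hmono hopen
    (fun j => (hpc j).2.resolve_left (nonempty_compl.mp (hDc j)))
    (fun j => continuousOn_neg_log_infDist_compl (hopen j) (hDc j))
    (fun i j hij z hz => neg_le_neg (Real.log_le_log (infDist_compl_pos (hopen i) (hDc i) hz)
      (infDist_compl_mono (hmono hij) (hDc j) z)))
    (fun z hz => ((tendsto_infDist_compl_iUnion hmono hopen hUc z).log
      (infDist_compl_pos hUopen hUc hz).ne').neg)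
    (continuousOn_neg_log_infDist_compl hUopen hUc)
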